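/- Conversely, if T is a bounded operator on a complex Hilbert space H satisfying 2|Im ⟪T f, f⟫| ≤ tan α · (‖f‖² - ‖T f‖²) for all f ∈ H and some α ∈ (0, π/2), then ‖T sin α ± i cos α·I‖ ≤ 1. -/

import Mathlib

open scoped ComplexInnerProductSpace

/-!
Expanding the square, `‖(sin α) T f ± i (cos α) f‖² = sin²α ‖Tf‖² + cos²α ‖f‖² ∓ 2 sin α cos α Im ⟪Tf, f⟫`,
and the hypothesis multiplied by `sin α cos α` bounds the cross term by `sin²α (‖f‖² - ‖Tf‖²)`;
since `sin²α + cos²α = 1` the right-hand side collapses to `‖f‖²`.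
-/

section

variable {H : Type*} [NormedAddCommGroup H] [InnerProductSpace ℂ H]

theorem norm_real_smul_add_I_mul_smul_sq (s c : ℝ) (x y : H) :
    ‖(s : ℂ) • x + (Complex.I * c) • y‖ ^ 2 =
      s ^ 2 * ‖x‖ ^ 2 + c ^ 2 * ‖y‖ ^ 2 - 2 * s * c * (⟪x, y⟫).im := by
  have hcross : RCLike.re ⟪(s : ℂ) • x, (Complex.I * c) • y⟫ = -(s * c * (⟪x, y⟫).im) := by
    rw [inner_smul_left, inner_smul_right, Complex.conj_ofReal, RCLike.re_to_complex,
      Complex.re_ofReal_mul, mul_assoc, Complex.I_mul_re, Complex.im_ofReal_mul]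
    ring
  rw [norm_add_sq (𝕜 := ℂ), hcross, norm_smul, norm_smul, Complex.norm_real, norm_mul,
    Complex.norm_I, Complex.norm_real, Real.norm_eq_abs, Real.norm_eq_abs]
  nlinarith [sq_abs s, sq_abs c]

theorem norm_real_smul_add_I_mul_smul_one_le_one (T : H →L[ℂ] H) {s c : ℝ} (hs : 0 ≤ s)
    (hsc : s ^ 2 + c ^ 2 = 1)
    (hT : ∀ f : H, 2 * |c| * |(⟪T f, f⟫).im| ≤ s * (‖f‖ ^ 2 - ‖T f‖ ^ 2)) :
    ‖(s : ℂ) • T + (Complex.I * c) • (1 : H →L[ℂ] H)‖ ≤ 1 := by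
  refine ContinuousLinearMap.opNorm_le_bound _ zero_le_one fun f => ?_
  rw [one_mul]
  have hcross : -(s * c * (⟪T f, f⟫).im) ≤ s * (|c| * |(⟪T f, f⟫).im|) := by
    calc -(s * c * (⟪T f, f⟫).im) = s * -(c * (⟪T f, f⟫).im) := by ring
      _ ≤ s * |c * (⟪T f, f⟫).im| := mul_le_mul_of_nonneg_left (neg_le_abs _) hs
      _ = s * (|c| * |(⟪T f, f⟫).im|) := by rw [abs_mul]
  have hsq : ‖(s : ℂ) • T f + (Complex.I * c) • f‖ ^ 2 ≤ ‖f‖ ^ 2 := by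
    rw [norm_real_smul_add_I_mul_smul_sq]
    nlinarith [mul_le_mul_of_nonneg_left (hT f) hs]
  simpa using pow_le_pow_iff_left₀ (norm_nonneg _) (norm_nonneg _) two_ne_zero |>.mp hsq

end

theorem stmt_3_general {H : Type*} [NormedAddCommGroup H] [InnerProductSpace ℂ H]
    (T : H →L[ℂ] H) (α : ℝ) (hα : α ∈ Set.Ioo 0 (Real.pi / 2))
    (h : ∀ f : H, 2 * |(⟪T f, f⟫).im| ≤ Real.tan α * (‖f‖ ^ 2 - ‖T f‖ ^ 2)) :
    ‖((Real.sin α : ℂ)) • T + (Complex.I * (Real.cos α : ℂ)) • (1 : H →L[ℂ] H)‖ ≤ 1 ∧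
    ‖((Real.sin α : ℂ)) • T - (Complex.I * (Real.cos α : ℂ)) • (1 : H →L[ℂ] H)‖ ≤ 1 := by
  obtain ⟨hα0, hαπ⟩ := hα
  have hcos : 0 < Real.cos α := Real.cos_pos_of_mem_Ioo ⟨by linarith [Real.pi_pos], hαπ⟩
  have hsin : 0 ≤ Real.sin α := Real.sin_nonneg_of_nonneg_of_le_pi hα0.le (by linarith)
  have hT : ∀ f : H, 2 * |Real.cos α| * |(⟪T f, f⟫).im| ≤
      Real.sin α * (‖f‖ ^ 2 - ‖T f‖ ^ 2) := fun f =>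
    calc 2 * |Real.cos α| * |(⟪T f, f⟫).im| = Real.cos α * (2 * |(⟪T f, f⟫).im|) := by
          rw [abs_of_pos hcos]; ring
      _ ≤ Real.cos α * (Real.tan α * (‖f‖ ^ 2 - ‖T f‖ ^ 2)) :=
          mul_le_mul_of_nonneg_left (h f) hcos.le
      _ = Real.sin α * (‖f‖ ^ 2 - ‖T f‖ ^ 2) := by
          rw [Real.tan_eq_sin_div_cos]; field_simp
  constructor
  · exact norm_real_smul_add_I_mul_smul_one_le_one T hsin (Real.sin_sq_add_cos_sq α) hT
  · have := norm_real_smul_add_I_mul_smul_one_le_one T hsin (c := -Real.cos α)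
      (by rw [neg_sq, Real.sin_sq_add_cos_sq]) (by simpa only [abs_neg] using hT)
    simpa [sub_eq_add_neg] using this

/-- If `2|Im ⟪Tf,f⟫| ≤ tan α (‖f‖² - ‖Tf‖²)` for all `f` and some `α ∈ (0, π/2)`,
then `‖T sin α ± i cos α · I‖ ≤ 1`. -/
theorem stmt_3 {H : Type*} [NormedAddCommGroup H] [InnerProductSpace ℂ H] [CompleteSpace H]
    (T : H →L[ℂ] H) (α : ℝ) (hα : α ∈ Set.Ioo 0 (Real.pi / 2))
    (h : ∀ f : H, 2 * |(⟪T f, f⟫).im| ≤ Real.tan α * (‖f‖ ^ 2 - ‖T f‖ ^ 2)) :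
    ‖((Real.sin α : ℂ)) • T + (Complex.I * (Real.cos α : ℂ)) • (1 : H →L[ℂ] H)‖ ≤ 1 ∧
    ‖((Real.sin α : ℂ)) • T - (Complex.I * (Real.cos α : ℂ)) • (1 : H →L[ℂ] H)‖ ≤ 1 :=
  stmt_3_general T α hα h
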